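/- arXiv:2502.05840 — 6 statements merged into one kernel-verified Lean document; each statement's English description precedes it below -/
import Mathlib

section
/- Every function λ labelling the finite prefixes (of even length indexed by levels) of tuples in κ^(d_odd) by a countable label set L admits an everywhere-cofinal subtree T ⊆ κ^(d_odd) on which λ is constant per level, where κ = 2^(ℵ₀). Formally: let d be even, let d_odd = {1,3,...,d-1}, and let Nodes be the set of all tuples of ordinals < κ indexed by an initial segment {1,3,...,x-1} of d_odd for even x ≤ d. Given λ : Nodes → L with L countable, there exists T ⊆ κ^(d_odd) such that (1) for every node s of T (a prefix of some element of T), the set {t : s⌣t ∈ T} is cofinal in κ^({x+1,...,d-1}_odd) ordered lexicographically, and (2) for every even x ≤ d, λ takes a single value on all length-x prefixes of elements of T. -/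
/-!
Since `2^ℵ₀` has uncountable cofinality (König), every countable set of ordinals below `κ` is
bounded, so a countable colouring of `κ` has an unbounded colour class. By backward induction on
the level, every node `s` carries a list `ℓ` of labels such that `s` roots an unboundedly
branching subtree whose nodes at relative depth `k` all have label `ℓ[k]`: pigeonhole over the
countably many lists obtained for the children. The branches of this subtree through the root
form `T`; unbounded branching at the first free coordinate is lexicographic cofinality.
-/

/-- Ordinals below `κ = 2^ℵ₀` (the entries of signature tuples). -/
def OrdBelowContinuum : Type 1 :=
  {o : Ordinal // o < Cardinal.continuum.ord}

noncomputable instance : LinearOrder OrdBelowContinuum :=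
  inferInstanceAs (LinearOrder {o : Ordinal // o < Cardinal.continuum.ord})

/-- `u ≤ t` lexicographically, comparing only the coordinates with index `≥ x`
(smaller index more significant). -/
def SuffLE {e : ℕ} (x : ℕ) (u t : Fin e → OrdBelowContinuum) : Prop :=
  (∀ i : Fin e, x ≤ (i : ℕ) → u i = t i) ∨
    ∃ i : Fin e, x ≤ (i : ℕ) ∧ u i < t i ∧
      ∀ j : Fin e, x ≤ (j : ℕ) → (j : ℕ) < (i : ℕ) → u j = t j

open Set

theorem exists_not_bddAbove_preimage_singleton {α V : Type*} [Preorder α] [NoMaxOrder α]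
    [Countable V] (hα : ∀ s : Set α, s.Countable → BddAbove s) (f : α → V) :
    ∃ v, ¬BddAbove (f ⁻¹' {v}) := by
  by_contra! h
  choose b hb using h
  obtain ⟨c, hc⟩ := hα (range b) (countable_range b)
  exact not_bddAbove_univ ⟨c, fun a _ => (hb (f a) rfl).trans (hc (mem_range_self _))⟩

namespace CofinalTree

variable {α L : Type*} [Preorder α] (c : (x : ℕ) → (Fin x → α) → L)

/-- `s` roots a subtree in which every node at relative depth `k < ls.length` has label `ls[k]`
and unboundedly many children. -/
def Good : List L → {x : ℕ} → (Fin x → α) → Prop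
  | [], _, _ => True
  | l :: ls, x, s => c x s = l ∧ ¬BddAbove {a | Good ls (Fin.snoc s a : Fin (x + 1) → α)}

theorem exists_good [NoMaxOrder α] [Countable L] (hα : ∀ s : Set α, s.Countable → BddAbove s)
    (n : ℕ) {x : ℕ} (s : Fin x → α) : ∃ ls : List L, ls.length = n ∧ Good c ls s := by
  induction n generalizing x with
  | zero => exact ⟨[], rfl, trivial⟩
  | succ n ih =>
    choose ls hlen hgood using fun a => ih (Fin.snoc s a : Fin (x + 1) → α)
    obtain ⟨v, hv⟩ := exists_not_bddAbove_preimage_singleton hα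
      fun a => (⟨ls a, hlen a⟩ : {l : List L // l.length = n})
    refine ⟨c x s :: v.1, by simp [v.2], rfl, fun hbdd => hv (hbdd.mono ?_)⟩
    rintro a rfl
    exact hgood a

def PrefixesGood (ℓ : List L) {x : ℕ} (s : Fin x → α) : Prop :=
  ∀ y (hy : y ≤ x), Good c (ℓ.drop y) (s ∘ Fin.castLE hy)

variable {c} {ℓ : List L} {x : ℕ} {s : Fin x → α}

theorem PrefixesGood.comp_castLE (hs : PrefixesGood c ℓ s) {y : ℕ} (hy : y ≤ x) :
    PrefixesGood c ℓ (s ∘ Fin.castLE hy) :=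
  fun z hz => hs z (hz.trans hy)

theorem PrefixesGood.label_eq (hs : PrefixesGood c ℓ s) (hx : x < ℓ.length) : c x s = ℓ[x] := by
  have hgood : Good c (ℓ.drop x) s := hs x le_rfl
  rw [List.drop_eq_getElem_cons hx] at hgood
  exact hgood.1

theorem PrefixesGood.snoc (hs : PrefixesGood c ℓ s) {a : α}
    (ha : Good c (ℓ.drop (x + 1)) (Fin.snoc s a : Fin (x + 1) → α)) :
    PrefixesGood c ℓ (Fin.snoc s a : Fin (x + 1) → α) := by
  intro y hy
  rcases hy.lt_or_eq with hy | rfl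
  · convert hs y (Nat.le_of_lt_succ hy) using 1
    funext i
    exact Fin.snoc_castSucc (α := fun _ => α) (i := Fin.castLE _ i) ..
  · exact ha

theorem PrefixesGood.not_bddAbove_snoc (hs : PrefixesGood c ℓ s) (hx : x < ℓ.length) :
    ¬BddAbove {a | PrefixesGood c ℓ (Fin.snoc s a : Fin (x + 1) → α)} := by
  have hgood : Good c (ℓ.drop x) s := hs x le_rfl
  rw [List.drop_eq_getElem_cons hx] at hgood
  exact fun hbdd => hgood.2 (hbdd.mono fun _ ha => hs.snoc ha)

theorem PrefixesGood.exists_extension [Nonempty α] {e : ℕ} (hℓ : e < ℓ.length)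
    (hs : PrefixesGood c ℓ s) (hx : x ≤ e) :
    ∃ t : Fin e → α, PrefixesGood c ℓ t ∧ t ∘ Fin.castLE hx = s := by
  induction hk : e - x generalizing x with
  | zero =>
    obtain rfl : x = e := by omega
    exact ⟨s, hs, rfl⟩
  | succ k ih =>
    obtain ⟨a, ha⟩ := nonempty_of_not_bddAbove (hs.not_bddAbove_snoc (by omega))
    obtain ⟨t, ht, hts⟩ := ih ha (by omega : x + 1 ≤ e) (by omega)
    refine ⟨t, ht, funext fun i => ?_⟩
    simpa using congrFun hts (Fin.castSucc i)

end CofinalTree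

open CofinalTree in
theorem exists_cofinal_tree_label_eq {α L : Type*} [LinearOrder α] [NoMaxOrder α] [Countable L]
    (hα : ∀ s : Set α, s.Countable → BddAbove s) (c : (x : ℕ) → (Fin x → α) → L) (e : ℕ) :
    ∃ T : Set (Fin e → α), T.Nonempty ∧
      (∀ t ∈ T, ∀ x (hx : x < e) (b : α),
        ∃ t' ∈ T, (∀ i : Fin e, (i : ℕ) < x → t' i = t i) ∧ b < t' ⟨x, hx⟩) ∧
      (∀ x (hx : x ≤ e), ∀ s ∈ T, ∀ t ∈ T, c x (s ∘ Fin.castLE hx) = c x (t ∘ Fin.castLE hx)) := by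
  -- an upper bound of `∅` is an element of `α`
  have : Nonempty α := ⟨(hα ∅ countable_empty).some⟩
  obtain ⟨ℓ, hlen, hgood⟩ := exists_good c hα (e + 1) (Fin.elim0 : Fin 0 → α)
  have hroot : PrefixesGood c ℓ (Fin.elim0 : Fin 0 → α) := by
    intro y hy
    obtain rfl := Nat.le_zero.1 hy
    rwa [Subsingleton.elim (Fin.elim0 ∘ _) Fin.elim0]
  refine ⟨{t | PrefixesGood c ℓ t}, ?_, fun t ht x hx b => ?_, fun x hx s hs t ht => ?_⟩
  · obtain ⟨t, ht, -⟩ := hroot.exists_extension (by omega) (Nat.zero_le e)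
    exact ⟨t, ht⟩
  · obtain ⟨a, ha, hba⟩ :=
      not_bddAbove_iff.1 ((ht.comp_castLE hx.le).not_bddAbove_snoc (by omega)) b
    obtain ⟨t', ht', hext⟩ := ha.exists_extension (by omega) hx
    refine ⟨t', ht', fun i hi => ?_, ?_⟩
    · have hi' := congrFun hext (Fin.castSucc ⟨i, hi⟩)
      rw [Function.comp_apply, Fin.snoc_castSucc] at hi'
      exact hi'
    · have hlast := congrFun hext (Fin.last x)
      simp only [Function.comp_apply, Fin.snoc_last] at hlast
      exact hba.trans_eq hlast.symm
  · rw [(hs.comp_castLE hx).label_eq (by omega), (ht.comp_castLE hx).label_eq (by omega)]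

instance : Nonempty OrdBelowContinuum :=
  ⟨⟨0, (Cardinal.isSuccLimit_ord Cardinal.aleph0_le_continuum).bot_lt⟩⟩

instance : NoMaxOrder OrdBelowContinuum :=
  ⟨fun a => ⟨⟨Order.succ a.1,
    (Cardinal.isSuccLimit_ord Cardinal.aleph0_le_continuum).succ_lt a.2⟩, Order.lt_succ a.1⟩⟩

theorem OrdBelowContinuum.bddAbove_of_countable {s : Set OrdBelowContinuum} (hs : s.Countable) :
    BddAbove s := by
  obtain ⟨f, hf⟩ := countable_iff_exists_subset_range.1 hs
  have hsup : ⨆ n, (f n).1 < Cardinal.continuum.ord :=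
    Ordinal.iSup_lt_of_lt_cof (by
      simpa [Cardinal.two_power_aleph0] using
        Cardinal.lt_cof_ord_power (b := 2) le_rfl Cardinal.one_lt_two) fun n => (f n).2
  refine ⟨⟨_, hsup⟩, fun a ha => ?_⟩
  obtain ⟨n, rfl⟩ := hf ha
  exact Ordinal.le_iSup _ n

theorem suffLE_of_lt {e x : ℕ} {u t : Fin e → OrdBelowContinuum} (hx : x < e)
    (h : u ⟨x, hx⟩ < t ⟨x, hx⟩) : SuffLE x u t :=
  Or.inr ⟨⟨x, hx⟩, le_rfl, h, fun _ hj hjx => absurd hjx hj.not_gt⟩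

theorem suffLE_of_le {e x : ℕ} {u t : Fin e → OrdBelowContinuum} (hx : e ≤ x) : SuffLE x u t :=
  Or.inl fun i hi => absurd (i.2.trans_le hx) hi.not_gt

/-- Extraction of an everywhere-cofinal subtree on which a countable inner
labelling is constant per level.  Tuples in `κ^(d_odd)` (with `d = 2e` even and
`κ = 2^ℵ₀`) are encoded as functions `Fin e → OrdBelowContinuum`; a node at level
`x = 2·x'` is a prefix of length `x'`, encoded by a representative element of `T`
together with the cut `x'`. -/
theorem stmt4 (e : ℕ) (L : Type) [Countable L]
    (lab : (x : Fin (e + 1)) → (Fin (x : ℕ) → OrdBelowContinuum) → L) :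
    ∃ T : Set (Fin e → OrdBelowContinuum),
      T.Nonempty ∧
      -- everywhere cofinal: for each node of `T` (a prefix of an element `s ∈ T`,
      -- of any length `x ≤ e`), the subtree rooted at it is cofinal among all
      -- tuples on the remaining coordinates
      (∀ s ∈ T, ∀ x : ℕ, x ≤ e → ∀ u : Fin e → OrdBelowContinuum,
        ∃ t ∈ T, (∀ i : Fin e, (i : ℕ) < x → t i = s i) ∧ SuffLE x u t) ∧
      -- the labelling is constant per level on `T`
      (∀ x : Fin (e + 1), ∀ s ∈ T, ∀ t ∈ T,
        lab x (fun i => s ⟨(i : ℕ), by have h1 := i.isLt; have h2 := x.isLt; omega⟩) =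
          lab x (fun i => t ⟨(i : ℕ), by have h1 := i.isLt; have h2 := x.isLt; omega⟩)) := by
  obtain ⟨T, hne, hcof, hlab⟩ := exists_cofinal_tree_label_eq
    (fun _ => OrdBelowContinuum.bddAbove_of_countable)
    (fun x s => if hx : x < e + 1 then lab ⟨x, hx⟩ s else lab 0 fun i => i.elim0) e
  refine ⟨T, hne, fun s hs x hx u => ?_, fun x s hs t ht => ?_⟩
  · rcases hx.lt_or_eq with hx | rfl
    · obtain ⟨t, ht, hpre, hlt⟩ := hcof s hs x hx (u ⟨x, hx⟩)
      exact ⟨t, ht, hpre, suffLE_of_lt hx hlt⟩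
    · exact ⟨s, hs, fun _ _ => rfl, suffLE_of_le le_rfl⟩
  · have h := hlab x (Nat.lt_succ_iff.1 x.isLt) s hs t ht
    simp only [x.isLt, dif_pos] at h
    exact h
end

section
/- Let d be even and κ a cardinal. Define the graph S^κ_d whose vertices are tuples s of ordinals < κ indexed by odd priorities in {1,3,...,d-1}, with an edge s →^y s' (for y ∈ {0,...,d-1}) iff either y is even and s restricted to indices < y is ≥ s' restricted to indices < y (lexicographically), or y is odd and s restricted to indices ≤ y is > s' restricted to indices ≤ y (lexicographically). Then every vertex of S^κ_d satisfies the min-parity objective: every infinite path s_0 →^{y_0} s_1 →^{y_1} ... in S^κ_d has lim inf(y_i) even. -/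
open Filter

/-!
If the lim inf `x` of the priorities were odd, say `x = 2k + 1`, compare the vertices by their
first `k + 1` coordinates only. From some point on every priority is `≥ x`, and each such edge
does not increase this truncated tuple in the lexicographic order, while each of the infinitely
many edges of priority exactly `x` strictly decreases it. This is an infinite descent in a
well-founded order.
-/

/-- Ordinals below `κ.ord`: the entries of vertices of `S^κ_d`. -/
def OrdBelow (κ : Cardinal) : Type 1 := {o : Ordinal // o < κ.ord}

noncomputable instance (κ : Cardinal) : LinearOrder (OrdBelow κ) :=
  inferInstanceAs (LinearOrder {o : Ordinal // o < κ.ord})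

/-- `f = g` on the first `m` coordinates. -/
def EqBelow {κ : Cardinal} {e : ℕ} (m : ℕ) (f g : Fin e → OrdBelow κ) : Prop :=
  ∀ i : Fin e, (i : ℕ) < m → f i = g i

/-- `f < g` lexicographically, on the first `m` coordinates (smaller index more
significant). -/
def LexLT {κ : Cardinal} {e : ℕ} (m : ℕ) (f g : Fin e → OrdBelow κ) : Prop :=
  ∃ i : Fin e, (i : ℕ) < m ∧ f i < g i ∧ ∀ j : Fin e, (j : ℕ) < (i : ℕ) → f j = g j

/-- The edge relation of `S^κ_d` (for `d = 2e`; vertices are tuples of ordinals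
`< κ` indexed by the odd priorities `1,3,…,d−1`, coordinate `i` corresponding to
odd priority `2i+1`): `s →^y s'` iff `y` is even and `s' ≤ s` lexicographically on
the coordinates of index `< y` (i.e. the first `⌊y/2⌋` coordinates), or `y` is odd
and `s' < s` lexicographically on the coordinates of index `≤ y` (the first
`(y+1)/2` coordinates). -/
def SEdge {κ : Cardinal} {e : ℕ} (y : ℕ) (s s' : Fin e → OrdBelow κ) : Prop :=
  if Even y then EqBelow (y / 2) s' s ∨ LexLT (y / 2) s' s
  else LexLT ((y + 1) / 2) s' s

theorem Filter.exists_frequently_eq_and_eventually_le {ι : Type*} {l : Filter ι} [l.NeBot]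
    {y : ι → ℕ} {d : ℕ} (hy : ∀ i, y i < d) :
    ∃ x, (∃ᶠ i in l, y i = x) ∧ ∀ᶠ i in l, x ≤ y i := by
  classical
  have hfreq : ∃ v, ∃ᶠ i in l, y i = v := by
    by_contra! h
    have hall : ∀ᶠ i in l, ∀ v : Fin d, y i ≠ v := eventually_all.2 fun v => h v
    obtain ⟨i, hi⟩ := hall.exists
    exact hi ⟨y i, hy i⟩ rfl
  refine ⟨Nat.find hfreq, Nat.find_spec hfreq, ?_⟩
  have hbelow : ∀ᶠ i in l, ∀ v : Fin (Nat.find hfreq), y i ≠ v :=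
    eventually_all.2 fun v => not_frequently.1 (Nat.find_min hfreq v.2)
  filter_upwards [hbelow] with i hi
  by_contra! hlt
  exact hi ⟨y i, hlt⟩ rfl

theorem not_frequently_lt_of_eventually_le {α : Type*} [PartialOrder α] [WellFoundedLT α]
    {t : ℕ → α} (hle : ∀ᶠ i in atTop, t (i + 1) ≤ t i) :
    ¬ ∃ᶠ i in atTop, t (i + 1) < t i := by
  obtain ⟨N, hN⟩ := eventually_atTop.1 hle
  have hanti : Antitone fun n => t (N + n) :=
    antitone_nat_of_succ_le fun n => hN (N + n) le_self_add
  obtain ⟨n, hn⟩ := WellFoundedLT.antitone_chain_condition hanti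
  refine not_frequently.2 (eventually_atTop.2 ⟨N + n, fun i hi hlt => hlt.ne ?_⟩)
  have hsucc : t (N + n) = t (i + 1) := by
    simpa [show N + (i + 1 - N) = i + 1 by omega] using hn (i + 1 - N) (by omega)
  have hi : t (N + n) = t i := by
    simpa [show N + (i - N) = i by omega] using hn (i - N) (by omega)
  exact hsucc.symm.trans hi

section Truncation

variable {κ : Cardinal} {e : ℕ}

noncomputable def truncLex (m : ℕ) (a : Fin e → OrdBelow κ) : Lex (Fin e → Ordinal) :=
  toLex fun i => if (i : ℕ) < m then (a i).1 else 0

theorem truncLex_eq_of_eqBelow {m m' : ℕ} (hm : m ≤ m') {a b : Fin e → OrdBelow κ}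
    (h : EqBelow m' a b) : truncLex m a = truncLex m b := by
  unfold truncLex
  congr 1
  funext i
  split_ifs with hi
  · rw [h i (hi.trans_le hm)]
  · rfl

theorem truncLex_lt_of_lexLT {m : ℕ} {a b : Fin e → OrdBelow κ} (h : LexLT m a b) :
    truncLex m a < truncLex m b := by
  obtain ⟨i, him, hlt, heq⟩ := h
  refine ⟨i, fun j hj => ?_, ?_⟩
  · change (if (j : ℕ) < m then (a j).1 else 0) = if (j : ℕ) < m then (b j).1 else 0
    rw [heq j hj]
  · change (if (i : ℕ) < m then (a i).1 else 0) < if (i : ℕ) < m then (b i).1 else 0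
    simp only [him, if_true]
    exact hlt

theorem truncLex_le_of_lexLT {m m' : ℕ} {a b : Fin e → OrdBelow κ} (h : LexLT m' a b) :
    truncLex m a ≤ truncLex m b := by
  obtain ⟨i, him', hlt, heq⟩ := h
  by_cases him : (i : ℕ) < m
  · exact (truncLex_lt_of_lexLT ⟨i, him, hlt, heq⟩).le
  · refine (truncLex_eq_of_eqBelow le_rfl fun j hj => heq j ?_).le
    omega

theorem SEdge.truncLex_le {k y : ℕ} {s s' : Fin e → OrdBelow κ} (hky : 2 * k + 1 ≤ y)
    (h : SEdge y s s') : truncLex (k + 1) s' ≤ truncLex (k + 1) s := by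
  unfold SEdge at h
  split_ifs at h with hy
  · have hk : k + 1 ≤ y / 2 := by
      obtain ⟨r, rfl⟩ := hy
      omega
    rcases h with h | h
    · exact (truncLex_eq_of_eqBelow hk h).le
    · exact truncLex_le_of_lexLT h
  · exact truncLex_le_of_lexLT h

theorem SEdge.truncLex_lt {k : ℕ} {s s' : Fin e → OrdBelow κ} (h : SEdge (2 * k + 1) s s') :
    truncLex (k + 1) s' < truncLex (k + 1) s := by
  unfold SEdge at h
  rw [if_neg (Nat.not_even_iff_odd.2 (odd_two_mul_add_one k)),
    show (2 * k + 1 + 1) / 2 = k + 1 by omega] at h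
  exact truncLex_lt_of_lexLT h

end Truncation

theorem stmt9_general (κ : Cardinal) (e d : ℕ)
    (s : ℕ → Fin e → OrdBelow κ) (y : ℕ → ℕ) (hy : ∀ i, y i < d)
    (hedge : ∀ i, SEdge (y i) (s i) (s (i + 1))) :
    ∃ x, Even x ∧ (∃ᶠ i in atTop, y i = x) ∧ (∀ᶠ i in atTop, x ≤ y i) := by
  obtain ⟨x, hfreq, hev⟩ := exists_frequently_eq_and_eventually_le (l := atTop) hy
  refine ⟨x, ?_, hfreq, hev⟩
  by_contra hodd
  obtain ⟨k, rfl⟩ := Nat.not_even_iff_odd.1 hodd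
  refine not_frequently_lt_of_eventually_le (t := fun i => truncLex (k + 1) (s i))
    (hev.mono fun i hi => (hedge i).truncLex_le hi) (hfreq.mono fun i hi => ?_)
  exact (hi ▸ hedge i).truncLex_lt

/-- Every vertex of `S^κ_d` satisfies the min-parity objective: along any infinite
path `s 0 →^{y 0} s 1 →^{y 1} ⋯` with priorities `< d`, the lim inf of the
priorities is even. -/
theorem stmt9 (κ : Cardinal) (e d : ℕ) (hd : d = 2 * e)
    (s : ℕ → Fin e → OrdBelow κ) (y : ℕ → ℕ) (hy : ∀ i, y i < d)
    (hedge : ∀ i, SEdge (y i) (s i) (s (i + 1))) :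
    ∃ x, Even x ∧ (∃ᶠ i in atTop, y i = x) ∧ (∀ᶠ i in atTop, x ≤ y i) :=
  stmt9_general κ e d s y hy hedge
end

section
/- Let A be a parity automaton of index d and S a d-graph (directed graph with edges labelled by priorities in {0,...,d-1}) every vertex of which satisfies the min-parity objective Parity_d. Then the cascade product A ⋉ S, with vertices V(A) × V(S) and edges (q,s) →^c (q',s') iff there exists a priority y with q →^{c:y} q' in A and s →^y s' in S, satisfies L(A): every infinite path from (q₀,s₀) has a label whose projection to Σ belongs to L(A), and moreover A ⋉ S is well-founded (contains no infinite path whose label is eventually only ε). -/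
open Filter

/-- A (nondeterministic) parity automaton over the alphabet `Sig ∪ {ε}`
(`Option Sig`, with `none` playing the role of `ε`). -/
structure Aut (Sig Q : Type) where
  init : Q
  trans : Q → Option Sig → ℕ → Q → Prop

/-- `ρ` is a run of `A` (from its initial state) with labels `c` and priorities `p`. -/
def IsRun {Sig Q : Type} (A : Aut Sig Q) (c : ℕ → Option Sig) (p : ℕ → ℕ)
    (ρ : ℕ → Q) : Prop :=
  ρ 0 = A.init ∧ ∀ i, A.trans (ρ i) (c i) (p i) (ρ (i + 1))

/-- Min-parity acceptance: the lim inf of the priorities is even. -/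
def ParAccept (p : ℕ → ℕ) : Prop :=
  ∃ x, Even x ∧ (∃ᶠ i in atTop, p i = x) ∧ (∀ᶠ i in atTop, x ≤ p i)

/-- `w` is the projection to `Sig` of the word `c` over `Sig ∪ {ε}` (obtained by
removing all `ε`'s, and requiring infinitely many non-`ε` letters). -/
def IsProjection {Sig : Type} (c : ℕ → Option Sig) (w : ℕ → Sig) : Prop :=
  ∃ φ : ℕ → ℕ, StrictMono φ ∧ (∀ n, c (φ n) = some (w n)) ∧
    ∀ i, c i ≠ none → ∃ n, φ n = i

/-- The language of `A`: projections to `Sig` of the labels of accepting runs. -/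
def LangEps {Sig Q : Type} (A : Aut Sig Q) : Set (ℕ → Sig) :=
  {w | ∃ c p ρ, IsRun A c p ρ ∧ ParAccept p ∧ IsProjection c w}

/-!
The priorities witnessing the edges of a path in `A ⋉ S` label a path of `S`, so they satisfy
the parity condition; hence the first component of the path is an accepting run of `A` with the
same label. Accepting runs of `A` read infinitely many letters, which gives well-foundedness and
lets us project the label to a word of `L(A)`.
-/

theorem exists_isProjection_of_frequently_ne_none {Sig : Type} {c : ℕ → Option Sig}
    (h : ∃ᶠ i in atTop, c i ≠ none) : ∃ w, IsProjection c w := by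
  have hinf : {i | c i ≠ none}.Infinite := Nat.frequently_atTop_iff_infinite.mp h
  have hsome (n : ℕ) : (c (Nat.nth (c · ≠ none) n)).isSome :=
    Option.isSome_iff_ne_none.mpr (Nat.nth_mem_of_infinite hinf n)
  exact ⟨fun n => (c (Nat.nth (c · ≠ none) n)).get (hsome n), Nat.nth (c · ≠ none),
    Nat.nth_strictMono hinf, fun n => (Option.some_get (hsome n)).symm,
    fun i hi => ⟨Nat.count (c · ≠ none) i, Nat.nth_count hi⟩⟩

theorem exists_accepting_run_of_cascade_path {Sig Q V : Type} (A : Aut Sig Q)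
    (E : V → ℕ → V → Prop)
    (hS : ∀ (sv : ℕ → V) (pr : ℕ → ℕ), (∀ i, E (sv i) (pr i) (sv (i + 1))) → ParAccept pr)
    (π : ℕ → Q × V) (c : ℕ → Option Sig) (hinit : (π 0).1 = A.init)
    (hpath : ∀ i, ∃ y, A.trans (π i).1 (c i) y (π (i + 1)).1 ∧ E (π i).2 y (π (i + 1)).2) :
    ∃ p, IsRun A c p (fun i => (π i).1) ∧ ParAccept p := by
  choose p hA hE using hpath
  exact ⟨p, ⟨hinit, hA⟩, hS _ p hE⟩

theorem stmt10_general {Sig Q V : Type} (A : Aut Sig Q)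
    (E : V → ℕ → V → Prop)
    (hS : ∀ (sv : ℕ → V) (pr : ℕ → ℕ),
      (∀ i, E (sv i) (pr i) (sv (i + 1))) → ParAccept pr)
    (hA : ∀ c p ρ, IsRun A c p ρ → ParAccept p → (∃ᶠ i in atTop, c i ≠ none))
    (s₀ : V) (π : ℕ → Q × V) (c : ℕ → Option Sig)
    (hinit : π 0 = (A.init, s₀))
    (hpath : ∀ i, ∃ y, A.trans (π i).1 (c i) y (π (i + 1)).1 ∧
      E (π i).2 y (π (i + 1)).2) :
    (∃ᶠ i in atTop, c i ≠ none) ∧ ∃ w, IsProjection c w ∧ w ∈ LangEps A := by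
  obtain ⟨p, hrun, hacc⟩ :=
    exists_accepting_run_of_cascade_path A E hS π c (by rw [hinit]) hpath
  have hfreq : ∃ᶠ i in atTop, c i ≠ none := hA c p _ hrun hacc
  obtain ⟨w, hw⟩ := exists_isProjection_of_frequently_ne_none hfreq
  exact ⟨hfreq, w, hw, c, p, _, hrun, hacc, hw⟩

/-- Cascade product: if `A` is a parity automaton of index `d` and `S` is a
`d`-graph all of whose vertices satisfy `Parity_d`, then `A ⋉ S` (with edges
`(q,s) →^c (q',s')` iff for some priority `y`, `q →^{c:y} q'` in `A` and
`s →^y s'` in `S`) is well-founded (no infinite path is eventually labelled only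
by `ε`) and satisfies `L(A)`: the projection of the label of any infinite path
from `(q₀,s₀)` belongs to `L(A)`. -/
theorem stmt10 {Sig Q V : Type} (d : ℕ) (A : Aut Sig Q)
    (hdA : ∀ q a y q', A.trans q a y q' → y < d)
    (E : V → ℕ → V → Prop)
    (hdS : ∀ s y s', E s y s' → y < d)
    (hS : ∀ (sv : ℕ → V) (pr : ℕ → ℕ),
      (∀ i, E (sv i) (pr i) (sv (i + 1))) → ParAccept pr)
    (hA : ∀ c p ρ, IsRun A c p ρ → ParAccept p → (∃ᶠ i in atTop, c i ≠ none))
    (s₀ : V) (π : ℕ → Q × V) (c : ℕ → Option Sig)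
    (hinit : π 0 = (A.init, s₀))
    (hpath : ∀ i, ∃ y, A.trans (π i).1 (c i) y (π (i + 1)).1 ∧
      E (π i).2 y (π (i + 1)).2) :
    (∃ᶠ i in atTop, c i ≠ none) ∧ ∃ w, IsProjection c w ∧ w ∈ LangEps A :=
  stmt10_general A E hS hA s₀ π c hinit hpath
end

section
/- Define the automaton 𝒯 over input alphabet [d₁] × [d₂]* (pairs of priorities), with states the interleavings of the sequences ⟨1,3,...,d₁⟩ and ⟨1*,3*,...,d₂*⟩ of odd priorities, and transitions as follows: on input (y,z) from state τ, let i = min(ind_τ(y), ind_τ(z)) where ind_τ(p) is the position in τ of p if p is odd, of p−1 if p ≥ 2 is even, and 0 if p = 0; output priority 2i if the minimising priority is even and 2i−1 if odd; if odd and the minimum is achieved by y, the new state inserts the first element of the other family occurring after position i to the left of position i (symmetrically for z), otherwise the state is unchanged. Then 𝒯 recognises the language L = { w ∈ ([d₁]×[d₂]*)^ω : π₁(w) ∈ Parity_{d₁} or π₂(w) ∈ Parity_{d₂} }, where acceptance is min-parity on the output priorities. -/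
open Filter

/-- States of the automaton `𝒯`: lists over `[d₁]_odd ⊕ [d₂]*_odd` (left = first
family, right = starred family). -/
abbrev TS : Type := List (ℕ ⊕ ℕ)

/-- The list `[1, 3, …]` of odd numbers `≤ d`. -/
def oddList (d : ℕ) : List ℕ := (List.range ((d + 1) / 2)).map fun i => 2 * i + 1

/-- `τ` is a valid state of `𝒯`: an interleaving of `⟨1,3,…,d₁⟩` and
`⟨1*,3*,…,d₂*⟩`. -/
def IsTState (d₁ d₂ : ℕ) (τ : TS) : Prop :=
  τ.filterMap Sum.getLeft? = oddList d₁ ∧ τ.filterMap Sum.getRight? = oddList d₂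

/-- `ind_τ(p)`, 1-indexed position in `τ` of `p` (if `p` odd) or of `p − 1` (if
`p ≥ 2` even), and `0` if `p = 0`; `isLeft` chooses the family of `p`. -/
def ind (τ : TS) (isLeft : Bool) (p : ℕ) : ℕ :=
  if p = 0 then 0
  else
    (τ.idxOf (if isLeft then Sum.inl (if p % 2 = 1 then p else p - 1)
                else Sum.inr (if p % 2 = 1 then p else p - 1))) + 1

/-- Reconfiguration of the state upon an odd input priority at (1-indexed)
position `i`: the first element of the family `side` occurring at a position
`> i` is inserted on the left of position `i`. -/
def reconfig (τ : TS) (i : ℕ) (side : Bool) : TS :=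
  match (τ.drop i).findIdx? (fun s => s.isLeft == side) with
  | none => τ
  | some k =>
      τ.take (i - 1) ++ (τ.drop i).getD k (Sum.inl 0) :: ((τ.drop (i - 1)).eraseIdx (k + 1))

/-- The transition function of `𝒯` on input `(y, z)`: output priority and new
state.  With `i = min(ind_τ(y), ind_τ(z))`, the output is `2i` if the minimising
input priority is even (state unchanged) and `2i − 1` if it is odd (state
reconfigured by moving in the first later element of the other family). -/
def Tstep (τ : TS) (y z : ℕ) : ℕ × TS :=
  let iy := ind τ true y
  let iz := ind τ false z
  if iy ≤ iz then
    if y % 2 = 0 then (2 * iy, τ) else (2 * iy - 1, reconfig τ iy false)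
  else
    if z % 2 = 0 then (2 * iz, τ) else (2 * iz - 1, reconfig τ iz true)

/-- The sequence of states of `𝒯` along the input word `w`, starting from `τ₀`. -/
def Tstate (τ₀ : TS) (w : ℕ → ℕ × ℕ) : ℕ → TS
  | 0 => τ₀
  | n + 1 => (Tstep (Tstate τ₀ w n) (w n).1 (w n).2).2

/-- The sequence of output priorities of `𝒯` along the input word `w`. -/
def Tout (τ₀ : TS) (w : ℕ → ℕ × ℕ) (n : ℕ) : ℕ :=
  (Tstep (Tstate τ₀ w n) (w n).1 (w n).2).1

/-!
Count positions in a state from `0`. A move with output `o` only rearranges positions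
`≥ ⌈o / 2⌉ - 1`, so a run whose lim inf output is `2i` or `2i - 1` eventually never changes
positions `< i - 1` again. If the lim inf is `2i`, position `i - 1` is frozen; it holds the anchor
`a` of the even priority `a + 1` that produced the output `2i`, so the family of `a` sees `a + 1`
infinitely often, and the order of that family in the state forbids anything smaller later on.
If the lim inf is `2i - 1`, every output `2i - 1` moves a token of the other family to position
`i - 1`, so these outputs alternate between the two families. A smaller even priority `Y` in
either family would then put its anchor `Y - 1` into the frozen prefix and yield outputs
`< 2i - 1` whenever `Y` occurs.
-/
instance {α β : Type*} [BEq α] [LawfulBEq α] [BEq β] [LawfulBEq β] : LawfulBEq (α ⊕ β) where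
  rfl {x} := by cases x with
    | inl a => exact beq_self_eq_true a
    | inr b => exact beq_self_eq_true b
  eq_of_beq {x y} h := by
    cases x <;> cases y <;> first | cases h | exact congrArg _ (eq_of_beq h)

namespace List

variable {α β : Type*}

theorem idxOf_le_of_getElem? [BEq α] [LawfulBEq α] {l : List α} {j : ℕ} {a : α}
    (h : l[j]? = some a) : l.idxOf a ≤ j := by
  obtain ⟨hj, rfl⟩ := getElem?_eq_some_iff.1 h
  by_contra hlt
  simpa using not_of_lt_findIdx (Nat.lt_of_not_le hlt)

theorem filterMap_cons_append_comm {f : α → Option β} {e : α} {L Q : List α}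
    (h : f e = none ∨ L.filterMap f = []) :
    (e :: (L ++ Q)).filterMap f = (L ++ e :: Q).filterMap f := by
  rcases h with h | h <;> cases he : f e <;> simp_all

theorem exists_eq_append_of_getElem? {l : List α} {j : ℕ} {c : α} {p : α → Bool}
    (hj : l[j]? = some c) (hex : ∃ x ∈ l.drop (j + 1), p x) :
    ∃ A P e Q, l = A ++ c :: (P ++ e :: Q) ∧ A.length = j ∧ (∀ x ∈ P, p x = false) ∧ p e := by
  obtain ⟨hjl, rfl⟩ := getElem?_eq_some_iff.1 hj
  obtain ⟨e, he⟩ := Option.isSome_iff_exists.1 (find?_isSome.2 hex)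
  obtain ⟨hpe, P, Q, hPQ, hP⟩ := find?_eq_some_iff_append.1 he
  refine ⟨l.take j, P, e, Q, ?_, length_take_of_le hjl.le, fun x hx => by simpa using hP x hx, hpe⟩
  rw [← hPQ, ← drop_eq_getElem_cons, take_append_drop]

end List

def IsLimInf (p : ℕ → ℕ) (x : ℕ) : Prop :=
  (∃ᶠ n in atTop, p n = x) ∧ ∀ᶠ n in atTop, x ≤ p n

namespace IsLimInf

variable {p : ℕ → ℕ} {x y : ℕ}

theorem le_of_frequently (h : IsLimInf p x) (hy : ∃ᶠ n in atTop, p n = y) : x ≤ y := by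
  obtain ⟨n, hn, hxn⟩ := (hy.and_eventually h.2).exists
  exact hn ▸ hxn

theorem unique (h : IsLimInf p x) (h' : IsLimInf p y) : x = y :=
  le_antisymm (h.le_of_frequently h'.1) (h'.le_of_frequently h.1)

end IsLimInf

theorem exists_isLimInf {p : ℕ → ℕ} {B : ℕ} (hB : ∀ n, p n ≤ B) : ∃ x, IsLimInf p x := by
  classical
  have hrec : ∃ x, ∃ᶠ n in atTop, p n = x := by
    have : ∃ᶠ n in atTop, ∃ x ∈ Finset.range (B + 1), p n = x :=
      Frequently.of_forall fun n => ⟨p n, Finset.mem_range.2 (Nat.lt_succ_of_le (hB n)), rfl⟩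
    obtain ⟨x, -, hx⟩ := (frequently_exists_finset _).1 this
    exact ⟨x, hx⟩
  refine ⟨Nat.find hrec, Nat.find_spec hrec, ?_⟩
  have hsmall : ∀ᶠ n in atTop, ∀ y ∈ Finset.range (Nat.find hrec), p n ≠ y :=
    (Finset.range _).eventually_all.2 fun y hy =>
      not_frequently.1 (Nat.find_min hrec (Finset.mem_range.1 hy))
  filter_upwards [hsmall] with n hn
  by_contra! hlt
  exact hn _ (Finset.mem_range.2 hlt) rfl

theorem parAccept_iff_of_isLimInf {p : ℕ → ℕ} {x : ℕ} (h : IsLimInf p x) :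
    ParAccept p ↔ Even x :=
  ⟨fun ⟨_, hy, hf, he⟩ => (h.unique ⟨hf, he⟩) ▸ hy, fun hx => ⟨x, hx, h⟩⟩

-- Families are indexed by `Bool`: `true` is `[d₁]` (the left summand, `π₁`), `false` is `[d₂]*`.
def tok : Bool → ℕ → ℕ ⊕ ℕ
  | true => Sum.inl
  | false => Sum.inr

def part : Bool → ℕ ⊕ ℕ → Option ℕ
  | true => Sum.getLeft?
  | false => Sum.getRight?

def proj : Bool → ℕ × ℕ → ℕ
  | true => Prod.fst
  | false => Prod.snd

@[simp]
theorem isLeft_tok (s : Bool) (a : ℕ) : (tok s a).isLeft = s := by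
  cases s <;> rfl

theorem tok_inj {s t : Bool} {a b : ℕ} : tok s a = tok t b ↔ s = t ∧ a = b := by
  cases s <;> cases t <;> simp [tok]

theorem exists_eq_tok (x : ℕ ⊕ ℕ) : ∃ a, x = tok x.isLeft a := by
  cases x <;> exact ⟨_, rfl⟩

theorem part_eq_some {s : Bool} {x : ℕ ⊕ ℕ} {a : ℕ} : part s x = some a ↔ x = tok s a := by
  cases s <;> cases x <;> simp [part, tok]

theorem part_eq_none {s : Bool} {x : ℕ ⊕ ℕ} : part s x = none ↔ x.isLeft ≠ s := by
  cases s <;> cases x <;> simp [part]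

theorem mem_oddList {d a : ℕ} : a ∈ oddList d ↔ a % 2 = 1 ∧ a ≤ d := by
  simp only [oddList, List.mem_map, List.mem_range]
  constructor
  · rintro ⟨i, hi, rfl⟩
    omega
  · rintro ⟨h1, h2⟩
    exact ⟨a / 2, by omega, by omega⟩

theorem pairwise_oddList (d : ℕ) : (oddList d).Pairwise (· < ·) :=
  List.pairwise_lt_range.map _ fun _ _ h => by omega

theorem length_eq_length_filterMap_part_add (τ : TS) :
    τ.length = (τ.filterMap (part true)).length + (τ.filterMap (part false)).length := by
  induction τ with
  | nil => rfl
  | cons x τ ih =>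
    simp only [part] at ih ⊢
    cases x <;> simp [List.filterMap_cons, ih] <;> omega

namespace IsTState

variable {d₁ d₂ : ℕ} {τ : TS}

theorem filterMap_part (h : IsTState d₁ d₂ τ) (s : Bool) :
    τ.filterMap (part s) = oddList (proj s (d₁, d₂)) := by
  cases s
  exacts [h.2, h.1]

theorem of_filterMap_part (h : ∀ s, τ.filterMap (part s) = oddList (proj s (d₁, d₂))) :
    IsTState d₁ d₂ τ :=
  ⟨h true, h false⟩

theorem tok_mem (h : IsTState d₁ d₂ τ) {s : Bool} {a : ℕ} (ha : a % 2 = 1)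
    (had : a ≤ proj s (d₁, d₂)) : tok s a ∈ τ := by
  have : a ∈ τ.filterMap (part s) := by
    rw [h.filterMap_part, mem_oddList]
    exact ⟨ha, had⟩
  obtain ⟨x, hx, hxa⟩ := List.mem_filterMap.1 this
  rwa [← part_eq_some.1 hxa]

theorem lt_of_getElem? (h : IsTState d₁ d₂ τ) {i j : ℕ} (hij : i < j) {s : Bool} {a b : ℕ}
    (hi : τ[i]? = some (tok s a)) (hj : τ[j]? = some (tok s b)) : a < b := by
  obtain ⟨hil, hi⟩ := List.getElem?_eq_some_iff.1 hi
  obtain ⟨hjl, hj⟩ := List.getElem?_eq_some_iff.1 hj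
  have hsorted := List.pairwise_filterMap.1 (h.filterMap_part s ▸ pairwise_oddList _)
  exact List.pairwise_iff_getElem.1 hsorted i j hil hjl hij a (by simp [hi, part_eq_some]) b
    (by simp [hj, part_eq_some])

theorem length_eq (h : IsTState d₁ d₂ τ) :
    τ.length = (oddList d₁).length + (oddList d₂).length := by
  rw [length_eq_length_filterMap_part_add, h.filterMap_part, h.filterMap_part]
  rfl

end IsTState

/-- The odd priority whose position in a state determines `ind` of `p ≠ 0`. -/
def anchor (p : ℕ) : ℕ := if p % 2 = 1 then p else p - 1

theorem anchor_le (p : ℕ) : anchor p ≤ p := by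
  unfold anchor; split <;> omega

theorem anchor_mod_two {p : ℕ} (hp : p ≠ 0) : anchor p % 2 = 1 := by
  unfold anchor; split <;> omega

theorem anchor_of_odd {p : ℕ} (hp : p % 2 = 1) : anchor p = p := if_pos hp

theorem anchor_of_even {p : ℕ} (hp : p % 2 = 0) : anchor p = p - 1 := if_neg (by omega)

section ind

variable {τ : TS} {s : Bool} {p : ℕ}

@[simp]
theorem ind_zero (τ : TS) (s : Bool) : ind τ s 0 = 0 := rfl

theorem ind_of_ne_zero (hp : p ≠ 0) : ind τ s p = τ.idxOf (tok s (anchor p)) + 1 := by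
  cases s <;> simp [ind, anchor, tok, hp]

theorem ind_eq_zero_iff : ind τ s p = 0 ↔ p = 0 := by
  rcases eq_or_ne p 0 with rfl | hp
  · simp
  · simp [ind_of_ne_zero hp, hp]

theorem ind_le_length_add_one : ind τ s p ≤ τ.length + 1 := by
  rcases eq_or_ne p 0 with rfl | hp
  · simp
  · rw [ind_of_ne_zero hp]
    exact Nat.succ_le_succ List.idxOf_le_length

theorem ind_le_of_getElem? (hp : p ≠ 0) {j : ℕ} (h : τ[j]? = some (tok s (anchor p))) :
    ind τ s p ≤ j + 1 := by
  rw [ind_of_ne_zero hp]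
  exact Nat.succ_le_succ (List.idxOf_le_of_getElem? h)

theorem IsTState.getElem?_ind_sub_one {d₁ d₂ : ℕ} (h : IsTState d₁ d₂ τ) (hp : p ≠ 0)
    (hpd : p ≤ proj s (d₁, d₂)) : τ[ind τ s p - 1]? = some (tok s (anchor p)) := by
  rw [ind_of_ne_zero hp, Nat.add_sub_cancel]
  exact List.getElem?_idxOf (h.tok_mem (anchor_mod_two hp) ((anchor_le p).trans hpd))

end ind

section reconfig

variable {τ : TS} {side : Bool}

theorem reconfig_of_forall {i : ℕ} (h : ∀ x ∈ τ.drop i, x.isLeft ≠ side) :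
    reconfig τ i side = τ := by
  unfold reconfig
  rw [List.findIdx?_eq_none_iff.2 (by simpa using h)]

theorem reconfig_append {A P Q : TS} {c e : ℕ ⊕ ℕ} (hP : ∀ x ∈ P, x.isLeft ≠ side)
    (he : e.isLeft = side) :
    reconfig (A ++ c :: (P ++ e :: Q)) (A.length + 1) side = A ++ e :: c :: (P ++ Q) := by
  have hfind : (P ++ e :: Q).findIdx? (fun s => s.isLeft == side) = some P.length := by
    rw [List.findIdx?_eq_some_iff_getElem]
    refine ⟨by simp, by simp [he], fun j hj => ?_⟩
    rw [List.getElem_append_left hj]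
    simpa using hP _ (List.getElem_mem _)
  have hdrop : (A ++ c :: (P ++ e :: Q)).drop (A.length + 1) = P ++ e :: Q := by
    simp [List.drop_append, List.drop_eq_nil_of_le]
  unfold reconfig
  rw [hdrop, hfind]
  simp [List.getD_eq_getElem?_getD, List.eraseIdx_append_of_length_le]

theorem take_reconfig {i b : ℕ} (hb : b + 1 ≤ i) : (reconfig τ i side).take b = τ.take b := by
  unfold reconfig
  split
  · rfl
  · rename_i k hk
    have hi : i < τ.length := by
      obtain ⟨hk, -⟩ := List.findIdx?_eq_some_iff_getElem.1 hk
      rw [List.length_drop] at hk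
      omega
    rw [List.take_append_of_le_length (by rw [List.length_take]; omega), List.take_take,
      min_eq_left (by omega)]

theorem getElem?_reconfig {j : ℕ} {c : ℕ ⊕ ℕ} (hj : τ[j]? = some c)
    (hex : ∃ x ∈ τ.drop (j + 1), x.isLeft = side) :
    ∃ a, (reconfig τ (j + 1) side)[j]? = some (tok side a) := by
  obtain ⟨A, P, e, Q, rfl, rfl, hP, he⟩ :=
    List.exists_eq_append_of_getElem? (p := fun x => x.isLeft == side) hj (by simpa using hex)
  simp only [beq_eq_false_iff_ne, beq_iff_eq] at hP he
  obtain ⟨a, ha⟩ := exists_eq_tok e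
  refine ⟨a, ?_⟩
  rw [reconfig_append hP he, List.getElem?_append_right le_rfl, Nat.sub_self, ha, he]
  rfl

theorem IsTState.reconfig {d₁ d₂ j : ℕ} {c : ℕ ⊕ ℕ} (h : IsTState d₁ d₂ τ) (hj : τ[j]? = some c)
    (hc : c.isLeft ≠ side) : IsTState d₁ d₂ (reconfig τ (j + 1) side) := by
  by_cases hex : ∃ x ∈ τ.drop (j + 1), x.isLeft = side
  · obtain ⟨A, P, e, Q, rfl, rfl, hP, he⟩ :=
      List.exists_eq_append_of_getElem? (p := fun x => x.isLeft == side) hj (by simpa using hex)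
    simp only [beq_eq_false_iff_ne, beq_iff_eq] at hP he
    rw [reconfig_append hP he]
    refine IsTState.of_filterMap_part fun s => ?_
    rw [← h.filterMap_part s, List.filterMap_append, List.filterMap_append]
    congr 1
    refine List.filterMap_cons_append_comm (L := c :: P) ?_
    by_cases hs : side = s
    · subst hs
      exact Or.inr (List.filterMap_eq_nil_iff.2 fun x hx => part_eq_none.2 <| by
        rcases List.mem_cons.1 hx with rfl | hx
        exacts [hc, hP x hx])
    · exact Or.inl (part_eq_none.2 (he ▸ hs))
  · push Not at hex
    rwa [reconfig_of_forall hex]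

end reconfig

/-- The transition of `𝒯` when the input priority `p` of family `s` attains the minimum. -/
def Tmove (τ : TS) (s : Bool) (p : ℕ) : ℕ × TS :=
  if p % 2 = 0 then (2 * ind τ s p, τ) else (2 * ind τ s p - 1, reconfig τ (ind τ s p) (!s))

section Tstep

variable {τ : TS} {x : ℕ × ℕ}

theorem exists_Tstep_eq_Tmove (τ : TS) (x : ℕ × ℕ) :
    ∃ s, ind τ s (proj s x) ≤ ind τ (!s) (proj (!s) x) ∧
      Tstep τ x.1 x.2 = Tmove τ s (proj s x) := by
  unfold Tstep
  by_cases h : ind τ true x.1 ≤ ind τ false x.2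
  · exact ⟨true, h, by simp [h, Tmove, proj]⟩
  · exact ⟨false, by show ind τ false x.2 ≤ ind τ true x.1; omega, by simp [h, Tmove, proj]⟩

theorem Tstep_fst_le_two_mul_ind (τ : TS) (x : ℕ × ℕ) (s : Bool) :
    (Tstep τ x.1 x.2).1 ≤ 2 * ind τ s (proj s x) := by
  obtain ⟨t, hle, heq⟩ := exists_Tstep_eq_Tmove τ x
  have hmove : (Tmove τ t (proj t x)).1 ≤ 2 * ind τ t (proj t x) := by
    unfold Tmove; split <;> simp
  rw [heq]
  rcases Bool.eq_or_eq_not s t with rfl | rfl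
  · exact hmove
  · omega

theorem take_Tstep {b : ℕ} (h : 2 * b ≤ (Tstep τ x.1 x.2).1) :
    (Tstep τ x.1 x.2).2.take b = τ.take b := by
  obtain ⟨s, -, heq⟩ := exists_Tstep_eq_Tmove τ x
  rw [heq] at h ⊢
  by_cases hp : proj s x % 2 = 0
  · simp [Tmove, hp]
  · have hi : ind τ s (proj s x) ≠ 0 := ind_eq_zero_iff.not.2 (by omega)
    simp only [Tmove, hp, if_false] at h ⊢
    exact take_reconfig (by omega)

theorem exists_of_Tstep_fst_eq_two_mul {b : ℕ} (h : (Tstep τ x.1 x.2).1 = 2 * b) :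
    ∃ s, proj s x % 2 = 0 ∧ ind τ s (proj s x) = b := by
  obtain ⟨s, -, heq⟩ := exists_Tstep_eq_Tmove τ x
  rw [heq] at h
  by_cases hp : proj s x % 2 = 0
  · simp only [Tmove, hp, if_true] at h
    exact ⟨s, hp, by omega⟩
  · have hi : ind τ s (proj s x) ≠ 0 := ind_eq_zero_iff.not.2 (by omega)
    simp only [Tmove, hp, if_false] at h
    omega

variable {d₁ d₂ : ℕ} (h : IsTState d₁ d₂ τ) (hx : ∀ s, proj s x ≤ proj s (d₁, d₂))
include h hx

theorem IsTState.Tstep_snd : IsTState d₁ d₂ (Tstep τ x.1 x.2).2 := by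
  obtain ⟨s, -, heq⟩ := exists_Tstep_eq_Tmove τ x
  rw [heq]
  unfold Tmove
  split
  · exact h
  · have hp : proj s x ≠ 0 := by omega
    have hpos := h.getElem?_ind_sub_one hp (hx s)
    rw [← Nat.sub_add_cancel (Nat.one_le_iff_ne_zero.2 (ind_eq_zero_iff.not.2 hp))]
    exact h.reconfig hpos (by simp)

theorem IsTState.getElem?_of_Tstep_fst_eq_even {b : ℕ} (hout : (Tstep τ x.1 x.2).1 = 2 * (b + 1)) :
    ∃ s, proj s x % 2 = 0 ∧ proj s x ≠ 0 ∧ τ[b]? = some (tok s (proj s x - 1)) := by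
  obtain ⟨s, hp, hind⟩ := exists_of_Tstep_fst_eq_two_mul hout
  have hp0 : proj s x ≠ 0 := fun h0 => by rw [h0, ind_zero] at hind; omega
  refine ⟨s, hp, hp0, ?_⟩
  rw [← anchor_of_even hp, ← h.getElem?_ind_sub_one hp0 (hx s), hind, Nat.add_sub_cancel]

theorem IsTState.getElem?_of_Tstep_fst_eq_odd {b : ℕ} (hout : (Tstep τ x.1 x.2).1 = 2 * b + 1) :
    ∃ s, proj s x % 2 = 1 ∧ τ[b]? = some (tok s (proj s x)) ∧
      ∃ a, (Tstep τ x.1 x.2).2[b]? = some (tok (!s) a) := by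
  obtain ⟨s, hle, heq⟩ := exists_Tstep_eq_Tmove τ x
  rw [heq] at hout ⊢
  unfold Tmove at hout ⊢
  split_ifs at hout ⊢ with hp
  · omega
  dsimp only at hout ⊢
  have hind : ind τ s (proj s x) = b + 1 := by omega
  have hp0 : proj s x ≠ 0 := by omega
  have hb : τ[b]? = some (tok s (proj s x)) := by
    rw [← anchor_of_odd (by omega : proj s x % 2 = 1), ← h.getElem?_ind_sub_one hp0 (hx s), hind,
      Nat.add_sub_cancel]
  refine ⟨s, by omega, hb, ?_⟩
  -- the priority of the other family has its anchor strictly after position `b`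
  have hq0 : proj (!s) x ≠ 0 := fun h0 => by rw [h0, ind_zero] at hle; omega
  have hq := h.getElem?_ind_sub_one hq0 (hx (!s))
  have hbq : b < ind τ (!s) (proj (!s) x) - 1 := by
    rcases (show b = ind τ (!s) (proj (!s) x) - 1 ∨ b < ind τ (!s) (proj (!s) x) - 1 by omega)
      with hbq | hbq
    · rw [← hbq, hb, Option.some_inj, tok_inj] at hq
      simp at hq
    · exact hbq
  rw [hind]
  refine getElem?_reconfig hb ⟨tok (!s) (anchor (proj (!s) x)), ?_, isLeft_tok _ _⟩
  rw [List.mem_iff_getElem?]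
  exact ⟨ind τ (!s) (proj (!s) x) - 1 - (b + 1), by rw [List.getElem?_drop, ← hq]; congr 1; omega⟩

end Tstep

section Run

variable {d₁ d₂ : ℕ} {τ₀ : TS} {w : ℕ → ℕ × ℕ}

theorem isTState_Tstate (hτ : IsTState d₁ d₂ τ₀) (hw : ∀ n s, proj s (w n) ≤ proj s (d₁, d₂))
    (n : ℕ) : IsTState d₁ d₂ (Tstate τ₀ w n) := by
  induction n with
  | zero => exact hτ
  | succ n ih => exact ih.Tstep_snd (hw n)

theorem Tout_le_two_mul_ind (n : ℕ) (s : Bool) :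
    Tout τ₀ w n ≤ 2 * ind (Tstate τ₀ w n) s (proj s (w n)) :=
  Tstep_fst_le_two_mul_ind _ _ _

theorem Tout_le (hτ : IsTState d₁ d₂ τ₀) (hw : ∀ n s, proj s (w n) ≤ proj s (d₁, d₂)) (n : ℕ) :
    Tout τ₀ w n ≤ 2 * ((oddList d₁).length + (oddList d₂).length + 1) := by
  have h₁ := Tout_le_two_mul_ind (τ₀ := τ₀) (w := w) n true
  have h₂ := ind_le_length_add_one (τ := Tstate τ₀ w n) (s := true) (p := proj true (w n))
  rw [(isTState_Tstate hτ hw n).length_eq] at h₂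
  omega

theorem getElem?_Tstate_succ {n b j : ℕ} (h : 2 * b ≤ Tout τ₀ w n) (hj : j < b) :
    (Tstate τ₀ w (n + 1))[j]? = (Tstate τ₀ w n)[j]? := by
  rw [← List.getElem?_take_of_lt hj, ← List.getElem?_take_of_lt (l := Tstate τ₀ w n) hj]
  exact congrArg (·[j]?) (take_Tstep h)

theorem getElem?_Tstate_eq_of_forall_le {T b : ℕ} (h : ∀ n ≥ T, 2 * b ≤ Tout τ₀ w n) :
    ∀ n ≥ T, ∀ j < b, (Tstate τ₀ w n)[j]? = (Tstate τ₀ w T)[j]? := by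
  intro n hn j hj
  induction n, hn using Nat.le_induction with
  | base => rfl
  | succ n hn ih => exact (getElem?_Tstate_succ (h n hn) hj).trans ih

theorem exists_parAccept_of_frequently_Tout_eq_zero (h : ∃ᶠ n in atTop, Tout τ₀ w n = 0) :
    ∃ s, ParAccept (fun n => proj s (w n)) := by
  have : ∃ᶠ n in atTop, ∃ s, proj s (w n) = 0 := h.mono fun n hn =>
    (exists_of_Tstep_fst_eq_two_mul (b := 0) hn).imp fun _ hs => ind_eq_zero_iff.1 hs.2
  obtain ⟨s, hs⟩ := frequently_exists.1 this
  exact ⟨s, 0, Even.zero, hs, Eventually.of_forall fun _ => Nat.zero_le _⟩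

variable (hτ : IsTState d₁ d₂ τ₀) (hw : ∀ n s, proj s (w n) ≤ proj s (d₁, d₂))
include hτ hw

theorem exists_parAccept_of_isLimInf_Tout_even {b : ℕ} (hx : IsLimInf (Tout τ₀ w) (2 * (b + 1))) :
    ∃ s, ParAccept (fun n => proj s (w n)) := by
  obtain ⟨T, hT⟩ := eventually_atTop.1 hx.2
  have hstab := getElem?_Tstate_eq_of_forall_le hT
  obtain ⟨n₀, hn₀, hn₀T⟩ := (hx.1.and_eventually (eventually_ge_atTop T)).exists
  obtain ⟨s, hp₀, hp₀0, hc⟩ := (isTState_Tstate hτ hw n₀).getElem?_of_Tstep_fst_eq_even (hw n₀) hn₀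
  set p₀ := proj s (w n₀)
  have hpos : ∀ n ≥ T, (Tstate τ₀ w n)[b]? = some (tok s (p₀ - 1)) := fun n hn =>
    (hstab n hn b b.lt_succ_self).trans ((hstab n₀ hn₀T b b.lt_succ_self).symm.trans hc)
  -- position `b` is frozen, so every later output `2 (b + 1)` is produced by `p₀` again
  have hevent : ∀ n ≥ T, Tout τ₀ w n = 2 * (b + 1) → proj s (w n) = p₀ := by
    intro n hn hout
    obtain ⟨t, -, hp0, hct⟩ := (isTState_Tstate hτ hw n).getElem?_of_Tstep_fst_eq_even (hw n) hout
    rw [hpos n hn, Option.some_inj, tok_inj] at hct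
    obtain ⟨rfl, h⟩ := hct
    omega
  refine ⟨s, p₀, Nat.even_iff.2 hp₀,
    (hx.1.and_eventually (eventually_ge_atTop T)).mono fun n hn => hevent n hn.2 hn.1, ?_⟩
  filter_upwards [eventually_ge_atTop T] with n hnT
  have hout := Tout_le_two_mul_ind (τ₀ := τ₀) (w := w) n s
  have hb := hT n hnT
  have hp : proj s (w n) ≠ 0 := fun h0 => by rw [h0, ind_zero] at hout; omega
  rcases (show ind (Tstate τ₀ w n) s (proj s (w n)) = b + 1 ∨
      b + 1 < ind (Tstate τ₀ w n) s (proj s (w n)) by omega) with heq | hlt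
  · exact (hevent n hnT (by omega)).ge
  · have := (isTState_Tstate hτ hw n).lt_of_getElem? (by omega) (hpos n hnT)
      ((isTState_Tstate hτ hw n).getElem?_ind_sub_one hp (hw n s))
    have := anchor_le (proj s (w n))
    omega

theorem frequently_getElem?_Tstate_eq_tok {b : ℕ} (hx : IsLimInf (Tout τ₀ w) (2 * b + 1))
    (s : Bool) :
    ∃ᶠ n in atTop, proj s (w n) % 2 = 1 ∧ (Tstate τ₀ w n)[b]? = some (tok s (proj s (w n))) := by
  obtain ⟨T, hT⟩ := eventually_atTop.1 hx.2
  have hstep : ∀ n ≥ T, Tout τ₀ w n ≠ 2 * b + 1 →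
      (Tstate τ₀ w (n + 1))[b]? = (Tstate τ₀ w n)[b]? := fun n hn hne =>
    getElem?_Tstate_succ (by have := hT n hn; omega) b.lt_succ_self
  by_contra hnot
  obtain ⟨T', hT'⟩ := eventually_atTop.1 ((not_frequently.1 hnot).and (eventually_ge_atTop T))
  -- after `T'`, outputs `2b + 1` come from family `!s` only, whose token then sits at `b`
  have hquiet : ∀ n ≥ T', (∃ a, (Tstate τ₀ w n)[b]? = some (tok s a)) →
      Tout τ₀ w n ≠ 2 * b + 1 := by
    rintro n hn ⟨a, ha⟩ hout
    obtain ⟨t, hpt, hbt, -⟩ := (isTState_Tstate hτ hw n).getElem?_of_Tstep_fst_eq_odd (hw n) hout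
    obtain ⟨rfl, -⟩ := tok_inj.1 (Option.some_inj.1 (hbt.symm.trans ha))
    exact (hT' n hn).1 ⟨hpt, hbt⟩
  obtain ⟨n₁, hn₁, hout₁⟩ := frequently_atTop.1 hx.1 T'
  obtain ⟨s₁, hp₁, hb₁, a, hnext⟩ :=
    (isTState_Tstate hτ hw n₁).getElem?_of_Tstep_fst_eq_odd (hw n₁) hout₁
  have hs₁ : (!s₁) = s := by
    rcases Bool.eq_or_eq_not s₁ s with rfl | h
    · exact absurd ⟨hp₁, hb₁⟩ (hT' n₁ hn₁).1
    · rw [h, Bool.not_not]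
  have htok : ∀ n ≥ n₁ + 1, ∃ a, (Tstate τ₀ w n)[b]? = some (tok s a) := by
    intro n hn
    induction n, hn using Nat.le_induction with
    | base => exact ⟨a, hs₁ ▸ hnext⟩
    | succ n hn ih =>
      rw [hstep n (hT' n (by omega)).2 (hquiet n (by omega) ih)]
      exact ih
  obtain ⟨n, hn, hout⟩ := frequently_atTop.1 hx.1 (n₁ + 1)
  exact hquiet n (by omega) (htok n hn) hout

theorem not_parAccept_of_isLimInf_Tout_odd {b : ℕ} (hx : IsLimInf (Tout τ₀ w) (2 * b + 1))
    (s : Bool) : ¬ ParAccept (fun n => proj s (w n)) := by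
  rintro ⟨Y, hY, hYf, hYe⟩
  dsimp only at hYf hYe
  obtain ⟨T, hT⟩ := eventually_atTop.1 hx.2
  have hstab := getElem?_Tstate_eq_of_forall_le (b := b) fun n hn => (hT n hn).trans' (by omega)
  have hY0 : Y ≠ 0 := by
    rintro rfl
    obtain ⟨n, hn, hnT⟩ := (hYf.and_eventually (eventually_ge_atTop T)).exists
    have := Tout_le_two_mul_ind (τ₀ := τ₀) (w := w) n s
    rw [hn, ind_zero] at this
    have := hT n hnT
    omega
  have hYodd : (Y - 1) % 2 = 1 := by
    have := Nat.even_iff.1 hY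
    omega
  obtain ⟨n, ⟨hp, hb⟩, hnT, hYn⟩ :=
    ((frequently_getElem?_Tstate_eq_tok hτ hw hx s).and_eventually
      ((eventually_ge_atTop T).and hYe)).exists
  have hτn := isTState_Tstate hτ hw n
  -- the anchor `Y - 1` of `Y` sits in the frozen prefix, left of the odd `proj s (w n) ≥ Y`
  have hmem : tok s (Y - 1) ∈ Tstate τ₀ w n := hτn.tok_mem hYodd (by have := hw n s; omega)
  set j := (Tstate τ₀ w n).idxOf (tok s (Y - 1))
  have hj : (Tstate τ₀ w n)[j]? = some (tok s (Y - 1)) := List.getElem?_idxOf hmem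
  have hjb : j < b := by
    rcases lt_trichotomy j b with h | rfl | h
    · exact h
    · rw [hj, Option.some_inj, tok_inj] at hb
      omega
    · have := hτn.lt_of_getElem? h hb hj
      omega
  obtain ⟨k, hk, hkT⟩ := (hYf.and_eventually (eventually_ge_atTop T)).exists
  have hind : ind (Tstate τ₀ w k) s (proj s (w k)) ≤ j + 1 := by
    refine ind_le_of_getElem? (hk ▸ hY0) ?_
    rw [hk, anchor_of_even (Nat.even_iff.1 hY), hstab k hkT j hjb, ← hstab n hnT j hjb]
    exact hj
  have := Tout_le_two_mul_ind (τ₀ := τ₀) (w := w) k s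
  have := hT k hkT
  omega

end Run

theorem stmt11_general (d₁ d₂ : ℕ)
    (τ₀ : TS) (hτ : IsTState d₁ d₂ τ₀)
    (w : ℕ → ℕ × ℕ)
    (hw : ∀ n, (w n).1 ≤ d₁ ∧ 1 ≤ (w n).2 ∧ (w n).2 ≤ d₂) :
    ParAccept (Tout τ₀ w) ↔
      (ParAccept (fun n => (w n).1) ∨ ParAccept (fun n => (w n).2)) := by
  have hw' : ∀ n s, proj s (w n) ≤ proj s (d₁, d₂) := fun n s => by
    cases s
    exacts [(hw n).2.2, (hw n).1]
  have hproj : (ParAccept (fun n => (w n).1) ∨ ParAccept (fun n => (w n).2)) ↔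
      ∃ s, ParAccept (fun n => proj s (w n)) := by
    rw [Bool.exists_bool, or_comm]
    rfl
  obtain ⟨x, hx⟩ := exists_isLimInf (Tout_le hτ hw')
  rw [parAccept_iff_of_isLimInf hx, hproj]
  rcases Nat.even_or_odd' x with ⟨b, rfl | rfl⟩
  · simp only [even_two_mul, true_iff]
    rcases b with _ | b
    · exact exists_parAccept_of_frequently_Tout_eq_zero hx.1
    · exact exists_parAccept_of_isLimInf_Tout_even hτ hw' hx
  · simp only [Nat.not_even_two_mul_add_one, false_iff, not_exists]
    exact not_parAccept_of_isLimInf_Tout_odd hτ hw' hx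

/-- The automaton `𝒯` recognises the union of the two parity languages: for any
valid initial state, the run of `𝒯` on `w` is accepting (min-parity on outputs)
iff `π₁(w) ∈ Parity_{d₁}` or `π₂(w) ∈ Parity_{d₂}`. -/
theorem stmt11 (d₁ d₂ : ℕ) (h1 : Odd d₁) (h2 : Odd d₂)
    (τ₀ : TS) (hτ : IsTState d₁ d₂ τ₀)
    (w : ℕ → ℕ × ℕ)
    (hw : ∀ n, (w n).1 ≤ d₁ ∧ 1 ≤ (w n).2 ∧ (w n).2 ≤ d₂) :
    ParAccept (Tout τ₀ w) ↔
      (ParAccept (fun n => (w n).1) ∨ ParAccept (fun n => (w n).2)) :=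
  stmt11_general d₁ d₂ τ₀ hτ w hw
end

section
/- In a k-wise ε-complete parity automaton, for any two states q, q' in the same part with breakpoint priority x⁽⁰⁾ (the least even x such that not both q →^{ε:x+1} q' and q' →^{ε:x+1} q hold), if q →^{ε:x⁽⁰⁾} q', then the automaton cannot also contain a transition q' →^{ε:x} q for any even x, on pain of admitting an accepting run labelled by a word in Σ*ε^ω (which is forbidden). Consequently, for every even x ≥ x⁽⁰⁾ one obtains q →^{ε:x} q' (by downgrading the priority), and for every odd y < x⁽⁰⁾ both q →^{ε:y} q' and q' →^{ε:y} q hold. -/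
open Filter

/-- `ρ` is a run of `A` from the state `q` with labels `c` and priorities `p`. -/
def IsRunFrom {Sig Q : Type} (A : Aut Sig Q) (q : Q) (c : ℕ → Option Sig)
    (p : ℕ → ℕ) (ρ : ℕ → Q) : Prop :=
  ρ 0 = q ∧ ∀ i, A.trans (ρ i) (c i) (p i) (ρ (i + 1))

/-!
A reachable `ε`-cycle `q →^{ε:a} q' →^{ε:b} q` with `min a b` even closes a lasso: the path to `q`
followed by the cycle forever is an accepting run labelled in `Σ*ε^ω`. Given `q →^{ε:x₀} q'`, any
`q' →^{ε:x} q` with `x` even closes such a cycle, whatever the order of `x₀` and `x`. For even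
`x ≥ x₀`, `ε`-completeness gives `q →^{ε:x} q'` or `q' →^{ε:x+1} q`, and the latter closes a cycle
with minimum `x₀`.
-/

def splice {α : Type} (m : ℕ) (f g : ℕ → α) : ℕ → α :=
  fun i => if i < m then f i else g (i - m)

theorem splice_of_lt {α : Type} {m i : ℕ} (f g : ℕ → α) (h : i < m) : splice m f g i = f i :=
  if_pos h

theorem splice_of_le {α : Type} {m i : ℕ} (f g : ℕ → α) (h : m ≤ i) :
    splice m f g i = g (i - m) :=
  if_neg (Nat.not_lt.2 h)

def alternate {α : Type} (a b : α) : ℕ → α :=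
  fun i => if Even i then a else b

section Runs

variable {Sig Q : Type} {A : Aut Sig Q}

theorem IsRunFrom.splice {m : ℕ} {σ ρ : ℕ → Q} {c c' : ℕ → Option Sig} {p p' : ℕ → ℕ}
    (hpath : ∀ i < m, A.trans (σ i) (c i) (p i) (σ (i + 1))) (hρ : IsRunFrom A (σ m) c' p' ρ) :
    IsRunFrom A (σ 0) (splice m c c') (splice m p p') (splice m σ ρ) := by
  refine ⟨?_, fun i => ?_⟩
  · rcases Nat.eq_zero_or_pos m with rfl | hm
    · simpa [splice_of_le σ ρ le_rfl] using hρ.1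
    · exact splice_of_lt σ ρ hm
  · rcases lt_trichotomy (i + 1) m with hi | hi | hi
    · simpa only [splice_of_lt _ _ hi, splice_of_lt _ _ (Nat.lt_of_succ_lt hi)] using
        hpath i (Nat.lt_of_succ_lt hi)
    · have hlt : i < m := by omega
      simpa only [splice_of_lt _ _ hlt, hi, splice_of_le _ _ le_rfl, Nat.sub_self, hρ.1] using
        hpath i hlt
    · have hle : m ≤ i := by omega
      simpa only [splice_of_le _ _ hle, splice_of_le _ _ hi.le,
        show i + 1 - m = i - m + 1 by omega] using hρ.2 (i - m)

theorem isRunFrom_alternate {q q' : Q} {a b : ℕ} (hqq' : A.trans q none a q')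
    (hq'q : A.trans q' none b q) :
    IsRunFrom A q (fun _ => none) (alternate a b) (alternate q q') := by
  refine ⟨by simp [alternate], fun i => ?_⟩
  by_cases hi : Even i <;> simp [alternate, hi, Nat.even_add_one, hqq', hq'q]

end Runs

theorem ParAccept.splice {p : ℕ → ℕ} (m : ℕ) (f : ℕ → ℕ) (hp : ParAccept p) :
    ParAccept (splice m f p) := by
  obtain ⟨x, hx, hfreq, hev⟩ := hp
  refine ⟨x, hx, frequently_atTop.2 fun N => ?_, eventually_atTop.2 ?_⟩
  · obtain ⟨i, hi, hpi⟩ := frequently_atTop.1 hfreq N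
    exact ⟨i + m, by omega, by rwa [splice_of_le _ _ (by omega), Nat.add_sub_cancel]⟩
  · obtain ⟨N, hN⟩ := eventually_atTop.1 hev
    exact ⟨N + m, fun i hi => by rw [splice_of_le _ _ (by omega)]; exact hN _ (by omega)⟩

theorem parAccept_alternate {a b : ℕ} (hab : Even (min a b)) : ParAccept (alternate a b) := by
  refine ⟨min a b, hab, frequently_atTop.2 fun N => ?_, Eventually.of_forall fun i => ?_⟩
  · rcases min_choice a b with h | h
    · exact ⟨2 * N, by omega, by simp [alternate, h]⟩
    · exact ⟨2 * N + 1, by omega, by simp [alternate, h]⟩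
  · unfold alternate
    split_ifs
    exacts [min_le_left a b, min_le_right a b]

theorem Aut.exists_accepting_eventually_eps_run_of_cycle {Sig Q : Type} (A : Aut Sig Q)
    {q q' : Q} (hreach : ∃ (m : ℕ) (σ : ℕ → Q), σ 0 = A.init ∧ σ m = q ∧
      ∀ i < m, ∃ a y, A.trans (σ i) a y (σ (i + 1)))
    {a b : ℕ} (hqq' : A.trans q none a q') (hq'q : A.trans q' none b q) (hab : Even (min a b)) :
    ∃ (c : ℕ → Option Sig) (p : ℕ → ℕ) (ρ : ℕ → Q),
      IsRunFrom A A.init c p ρ ∧ ParAccept p ∧ (∀ᶠ i in atTop, c i = none) := by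
  obtain ⟨m, σ, hσ0, rfl, hpath⟩ := hreach
  have hlabels : ∀ i, ∃ a y, i < m → A.trans (σ i) a y (σ (i + 1)) := fun i => by
    by_cases hi : i < m
    · obtain ⟨a, y, t⟩ := hpath i hi
      exact ⟨a, y, fun _ => t⟩
    · exact ⟨none, 0, fun h => absurd h hi⟩
  choose c p hcp using hlabels
  refine ⟨splice m c fun _ => none, splice m p (alternate a b), splice m σ (alternate (σ m) q'),
    ?_, (parAccept_alternate hab).splice m p,
    eventually_atTop.2 ⟨m, fun i hi => splice_of_le c _ hi⟩⟩
  rw [← hσ0]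
  exact IsRunFrom.splice hcp (isRunFrom_alternate hqq' hq'q)

theorem stmt14_general {Sig Q : Type} (k d : ℕ) (A : Aut Sig Q) (part : Q → Fin k)
    -- k-wise ε-completeness
    (hcomp : ∀ x, Even x → x < d → ∀ q q', part q = part q' →
      (A.trans q none x q' ∨ A.trans q' none (x + 1) q))
    -- no accepting run whose label is eventually only ε
    (hNoBad : ¬ ∃ (c : ℕ → Option Sig) (p : ℕ → ℕ) (ρ : ℕ → Q),
      IsRunFrom A A.init c p ρ ∧ ParAccept p ∧ (∀ᶠ i in atTop, c i = none))
    (q q' : Q) (hpart : part q = part q')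
    -- q is reachable from the initial state
    (hreach : ∃ (m : ℕ) (σ : ℕ → Q), σ 0 = A.init ∧ σ m = q ∧
      ∀ i < m, ∃ a y, A.trans (σ i) a y (σ (i + 1)))
    -- x₀ is the breakpoint priority of {q, q'}
    (x₀ : ℕ) (hx₀e : Even x₀)
    (hmin : ∀ x, Even x → x < x₀ →
      (A.trans q none (x + 1) q' ∧ A.trans q' none (x + 1) q))
    -- and q →^{ε:x₀} q'
    (hq : A.trans q none x₀ q') :
    (∀ x, Even x → ¬ A.trans q' none x q) ∧
    (∀ x, Even x → x₀ ≤ x → x < d → A.trans q none x q') ∧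
    (∀ y, Odd y → y < x₀ → A.trans q none y q' ∧ A.trans q' none y q) := by
  have no_even_cycle : ∀ a b, A.trans q none a q' → A.trans q' none b q → ¬ Even (min a b) :=
    fun _ _ hab hba heven =>
      hNoBad (A.exists_accepting_eventually_eps_run_of_cycle hreach hab hba heven)
  refine ⟨fun x hx hq' => no_even_cycle x₀ x hq hq' (min_rec' Even hx₀e hx),
    fun x hx hle hlt => ?_, fun y hy hlt => ?_⟩
  · refine (hcomp x hx hlt q q' hpart).resolve_right fun hq' => no_even_cycle x₀ (x + 1) hq hq' ?_
    rwa [min_eq_left (by omega)]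
  · obtain ⟨z, rfl⟩ := hy
    exact hmin (2 * z) (even_two_mul z) (by omega)

/-- In a `k`-wise `ε`-complete parity automaton with no accepting run labelled in
`Σ*ε^ω`, consider states `q, q'` in the same part, reachable from the initial
state, with breakpoint priority `x₀` (the least even `x` such that not both
`q →^{ε:x+1} q'` and `q' →^{ε:x+1} q` hold) and such that `q →^{ε:x₀} q'`.  Then:
no `q' →^{ε:x} q` for even `x`; `q →^{ε:x} q'` for all even `x₀ ≤ x < d`; and
both `q →^{ε:y} q'` and `q' →^{ε:y} q` for all odd `y < x₀`. -/
theorem stmt14 {Sig Q : Type} (k d : ℕ) (A : Aut Sig Q) (part : Q → Fin k)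
    -- index d: all priorities are < d, and d is even
    (hdd : Even d) (hd : ∀ q a y q', A.trans q a y q' → y < d)
    -- k-wise ε-completeness
    (hcomp : ∀ x, Even x → x < d → ∀ q q', part q = part q' →
      (A.trans q none x q' ∨ A.trans q' none (x + 1) q))
    -- no accepting run whose label is eventually only ε
    (hNoBad : ¬ ∃ (c : ℕ → Option Sig) (p : ℕ → ℕ) (ρ : ℕ → Q),
      IsRunFrom A A.init c p ρ ∧ ParAccept p ∧ (∀ᶠ i in atTop, c i = none))
    (q q' : Q) (hpart : part q = part q')
    -- q is reachable from the initial state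
    (hreach : ∃ (m : ℕ) (σ : ℕ → Q), σ 0 = A.init ∧ σ m = q ∧
      ∀ i < m, ∃ a y, A.trans (σ i) a y (σ (i + 1)))
    -- x₀ is the breakpoint priority of {q, q'}
    (x₀ : ℕ) (hx₀e : Even x₀) (hx₀d : x₀ < d)
    (hbp : ¬ (A.trans q none (x₀ + 1) q' ∧ A.trans q' none (x₀ + 1) q))
    (hmin : ∀ x, Even x → x < x₀ →
      (A.trans q none (x + 1) q' ∧ A.trans q' none (x + 1) q))
    -- and q →^{ε:x₀} q'
    (hq : A.trans q none x₀ q') :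
    (∀ x, Even x → ¬ A.trans q' none x q) ∧
    (∀ x, Even x → x₀ ≤ x → x < d → A.trans q none x q') ∧
    (∀ y, Odd y → y < x₀ → A.trans q none y q' ∧ A.trans q' none y q) :=
  stmt14_general k d A part hcomp hNoBad q q' hpart hreach x₀ hx₀e hmin hq
end

section
/- Let Σ_n = {1,...,n} and W_n = { w ∈ Σ_n^ω : at least two distinct letters occur infinitely often in w }. Then in every game graph where all vertices are controlled by Eve (i.e., a one-player game) with objective W_n, if Eve can win from every vertex, she has a winning strategy with 2 memory states. Concretely: define χ₁(v) as the least colour reachable by a finite path from v and χ₂(v) as the second least, with shortest witnessing paths π¹_v, π²_v; the strategy that follows π¹ in memory state 1 (switching to state 2 upon outputting χ₁(v)) and π² in memory state 2 (switching back upon outputting χ₂(v)) ensures that, letting a = lim sup χ₁(v_i) along the play, both a and some colour > a are produced infinitely often, so the play is in W_n. -/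
open Filter

/-- The objective `W_n` over `Σ_n`: at least two distinct letters occur
infinitely often. -/
def TwoInf {n : ℕ} (c : ℕ → Fin n) : Prop :=
  ∃ a b : Fin n, a ≠ b ∧ (∃ᶠ i in atTop, c i = a) ∧ (∃ᶠ i in atTop, c i = b)

/-!
Let `χ₁ v` and `χ₂ v` be the least and second least colours reachable from `v`. Memory state `0`
walks along a shortest path to a `χ₁`-edge, state `1` along a shortest path to a `χ₂`-edge, and
the memory flips whenever the colour aimed at is produced. Along the play `χ₁` is monotone, hence
eventually a constant `a`. From then on, a step towards `χ₂ v` leads to a vertex with the same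
`χ₁` that still reaches `χ₂ v`, so `χ₂` does not change either, and the distance to the colour
aimed at strictly decreases until it is produced. Hence both memory states are left infinitely often, producing `a` and a colour `> a`
infinitely often.
-/

theorem TwoInf.of_frequently_lt {n : ℕ} {c : ℕ → Fin n} {a : Fin n}
    (ha : ∃ᶠ i in atTop, c i = a) (hlt : ∃ᶠ i in atTop, a < c i) : TwoInf c := by
  obtain ⟨b, hb⟩ := frequently_exists (p := fun b i => c i = b ∧ a < b) |>.1
    (hlt.mono fun i h => ⟨c i, rfl, h⟩)
  obtain ⟨i, rfl, hab⟩ := hb.exists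
  exact ⟨a, c i, hab.ne, ha, hb.mono fun _ h => h.1⟩

namespace ColouredGraph

variable {V C : Type*} (E : V → C → V → Prop)

inductive ReachesIn (c : C) : ℕ → V → Prop
  | here {v w : V} : E v c w → ReachesIn c 0 v
  | step {v w : V} {d : C} {k : ℕ} : E v d w → ReachesIn c k w → ReachesIn c (k + 1) v

def Reaches (v : V) (c : C) : Prop := ∃ k, ReachesIn E c k v

-- Junk value `0` when `c` is not reachable from `v`.
noncomputable def colourDist (c : C) (v : V) : ℕ := sInf {k | ReachesIn E c k v}

variable {E}

theorem reaches_of_edge {v w : V} {c : C} (he : E v c w) : Reaches E v c := ⟨0, .here he⟩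

theorem Reaches.of_edge {v w : V} {c d : C} (he : E v d w) (h : Reaches E w c) :
    Reaches E v c :=
  let ⟨k, hk⟩ := h
  ⟨k + 1, .step he hk⟩

theorem reaches_of_path {ρ : ℕ → V} {col : ℕ → C} (hρ : ∀ i, E (ρ i) (col i) (ρ (i + 1)))
    (i : ℕ) : Reaches E (ρ 0) (col i) := by
  induction i generalizing ρ col with
  | zero => exact reaches_of_edge (hρ 0)
  | succ i ih =>
    exact (ih (ρ := fun j => ρ (j + 1)) (col := fun j => col (j + 1)) fun j => hρ (j + 1)).of_edge
      (hρ 0)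

theorem exists_lt_reaches_of_twoInf {n : ℕ} {E : V → Fin n → V → Prop} {ρ : ℕ → V}
    {col : ℕ → Fin n} (hρ : ∀ i, E (ρ i) (col i) (ρ (i + 1))) (hcol : TwoInf col) :
    ∃ c₁ c₂, c₁ < c₂ ∧ Reaches E (ρ 0) c₁ ∧ Reaches E (ρ 0) c₂ := by
  obtain ⟨a, b, hab, ha, hb⟩ := hcol
  obtain ⟨i, rfl⟩ := ha.exists
  obtain ⟨j, rfl⟩ := hb.exists
  rcases hab.lt_or_gt with h | h
  exacts [⟨_, _, h, reaches_of_path hρ i, reaches_of_path hρ j⟩,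
    ⟨_, _, h, reaches_of_path hρ j, reaches_of_path hρ i⟩]

theorem Reaches.exists_edge_toward {v : V} {c : C} (h : Reaches E v c) :
    ∃ d w, E v d w ∧ (d = c ∨ Reaches E w c ∧ colourDist E c w < colourDist E c v) := by
  have hmem : ReachesIn E c (colourDist E c v) v := Nat.sInf_mem h
  generalize hk : colourDist E c v = k at hmem
  cases hmem with
  | here he => exact ⟨c, _, he, .inl rfl⟩
  | step he hw => exact ⟨_, _, he, .inr ⟨⟨_, hw⟩, (Nat.sInf_le hw).trans_lt (by omega)⟩⟩

section LeastColours

variable [LinearOrder C] [Finite C] (H : ∀ v, ∃ c₁ c₂, c₁ < c₂ ∧ Reaches E v c₁ ∧ Reaches E v c₂)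

noncomputable def leastColour (v : V) : C :=
  wellFounded_lt.min {c | Reaches E v c} (let ⟨c, _, _, hc, _⟩ := H v; ⟨c, hc⟩)

theorem reaches_leastColour (v : V) : Reaches E v (leastColour H v) :=
  WellFounded.min_mem _ {c | Reaches E v c} _

theorem leastColour_le {v : V} {c : C} (h : Reaches E v c) : leastColour H v ≤ c :=
  not_lt.1 (wellFounded_lt.not_lt_min {c | Reaches E v c} h)

noncomputable def secondColour (v : V) : C :=
  wellFounded_lt.min {c | Reaches E v c ∧ leastColour H v < c}
    (let ⟨_, c₂, h, hc₁, hc₂⟩ := H v; ⟨c₂, hc₂, (leastColour_le H hc₁).trans_lt h⟩)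

theorem reaches_secondColour (v : V) : Reaches E v (secondColour H v) :=
  (WellFounded.min_mem _ {c | Reaches E v c ∧ leastColour H v < c} _).1

theorem leastColour_lt_secondColour (v : V) : leastColour H v < secondColour H v :=
  (WellFounded.min_mem _ {c | Reaches E v c ∧ leastColour H v < c} _).2

theorem secondColour_le {v : V} {c : C} (h : Reaches E v c) (hc : leastColour H v < c) :
    secondColour H v ≤ c :=
  not_lt.1 (wellFounded_lt.not_lt_min {c | Reaches E v c ∧ leastColour H v < c} ⟨h, hc⟩)

theorem leastColour_le_of_edge {v w : V} {d : C} (he : E v d w) :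
    leastColour H v ≤ leastColour H w :=
  leastColour_le H ((reaches_leastColour H w).of_edge he)

theorem secondColour_eq_of_edge {v w : V} {d : C} (he : E v d w)
    (h₁ : leastColour H w = leastColour H v) (hw : Reaches E w (secondColour H v)) :
    secondColour H w = secondColour H v :=
  le_antisymm (secondColour_le H hw (h₁ ▸ leastColour_lt_secondColour H v))
    (secondColour_le H ((reaches_secondColour H w).of_edge he)
      (h₁ ▸ leastColour_lt_secondColour H w))

noncomputable def targetColour (v : V) (m : Fin 2) : C :=
  if m = 0 then leastColour H v else secondColour H v

theorem reaches_targetColour (v : V) (m : Fin 2) : Reaches E v (targetColour H v m) := by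
  unfold targetColour
  split_ifs
  exacts [reaches_leastColour H v, reaches_secondColour H v]

noncomputable def greedyColour (v : V) (m : Fin 2) : C :=
  (reaches_targetColour H v m).exists_edge_toward.choose

noncomputable def greedyNext (v : V) (m : Fin 2) : V :=
  (reaches_targetColour H v m).exists_edge_toward.choose_spec.choose

noncomputable def greedyMemory (v : V) (m : Fin 2) : Fin 2 :=
  if greedyColour H v m = targetColour H v m then m + 1 else m

theorem greedy_edge (v : V) (m : Fin 2) : E v (greedyColour H v m) (greedyNext H v m) :=
  (reaches_targetColour H v m).exists_edge_toward.choose_spec.choose_spec.1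

theorem greedy_of_ne_targetColour {v : V} {m : Fin 2} (hmiss : greedyColour H v m ≠ targetColour H v m)
    (h₁ : leastColour H (greedyNext H v m) = leastColour H v) :
    greedyMemory H v m = m ∧ targetColour H (greedyNext H v m) m = targetColour H v m ∧
      colourDist E (targetColour H v m) (greedyNext H v m) <
        colourDist E (targetColour H v m) v := by
  obtain ⟨hreach, hdist⟩ : Reaches E (greedyNext H v m) (targetColour H v m) ∧ _ :=
    ((reaches_targetColour H v m).exists_edge_toward.choose_spec.choose_spec.2).resolve_left hmiss
  refine ⟨if_neg hmiss, ?_, hdist⟩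
  unfold targetColour at hreach ⊢
  split_ifs at hreach ⊢
  exacts [h₁, secondColour_eq_of_edge H (greedy_edge H v m) h₁ hreach]

noncomputable def play (v₀ : V) (m₀ : Fin 2) (i : ℕ) : V × Fin 2 :=
  (fun q : V × Fin 2 => (greedyNext H q.1 q.2, greedyMemory H q.1 q.2))^[i] (v₀, m₀)

variable (v₀ : V) (m₀ : Fin 2)

theorem play_succ (i : ℕ) :
    play H v₀ m₀ (i + 1) =
      (greedyNext H (play H v₀ m₀ i).1 (play H v₀ m₀ i).2,
        greedyMemory H (play H v₀ m₀ i).1 (play H v₀ m₀ i).2) :=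
  Function.iterate_succ_apply' _ i _

theorem exists_leastColour_play_eq :
    ∃ T, ∀ i, T ≤ i → leastColour H (play H v₀ m₀ i).1 = leastColour H (play H v₀ m₀ T).1 := by
  have hmono : Monotone fun i => leastColour H (play H v₀ m₀ i).1 :=
    monotone_nat_of_le_succ fun i => by
      rw [play_succ]
      exact leastColour_le_of_edge H (greedy_edge H _ _)
  obtain ⟨T, hT⟩ := WellFoundedGT.monotone_chain_condition ⟨_, hmono⟩
  exact ⟨T, fun i hi => (hT i hi).symm⟩

variable {v₀ m₀} {T : ℕ}
  (hT : ∀ i, T ≤ i → leastColour H (play H v₀ m₀ i).1 = leastColour H (play H v₀ m₀ T).1)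
include hT

theorem exists_play_hits_target {i : ℕ} (hi : T ≤ i) :
    ∃ j, i ≤ j ∧ (play H v₀ m₀ j).2 = (play H v₀ m₀ i).2 ∧
      greedyColour H (play H v₀ m₀ j).1 (play H v₀ m₀ j).2 =
        targetColour H (play H v₀ m₀ j).1 (play H v₀ m₀ j).2 := by
  induction hk : colourDist E (targetColour H (play H v₀ m₀ i).1 (play H v₀ m₀ i).2)
      (play H v₀ m₀ i).1 using Nat.strong_induction_on generalizing i with
  | _ k ih =>
  by_cases hhit : greedyColour H (play H v₀ m₀ i).1 (play H v₀ m₀ i).2 =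
      targetColour H (play H v₀ m₀ i).1 (play H v₀ m₀ i).2
  · exact ⟨i, le_rfl, rfl, hhit⟩
  have h₁ := (hT (i + 1) (by omega)).trans (hT i hi).symm
  rw [play_succ] at h₁
  obtain ⟨hm, htarget, hdist⟩ := greedy_of_ne_targetColour H hhit h₁
  have hm' : (play H v₀ m₀ (i + 1)).2 = (play H v₀ m₀ i).2 := by rw [play_succ]; exact hm
  have hdist' : colourDist E (targetColour H (play H v₀ m₀ (i + 1)).1 (play H v₀ m₀ (i + 1)).2)
      (play H v₀ m₀ (i + 1)).1 < k := by
    rw [hm', ← hk, play_succ]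
    dsimp only
    rwa [htarget]
  obtain ⟨j, hj, hmj, hhitj⟩ := ih _ hdist' (by omega) rfl
  exact ⟨j, by omega, hmj.trans hm', hhitj⟩

theorem frequently_play_hits_target (m : Fin 2) :
    ∃ᶠ j in atTop, (play H v₀ m₀ j).2 = m ∧
      greedyColour H (play H v₀ m₀ j).1 (play H v₀ m₀ j).2 =
        targetColour H (play H v₀ m₀ j).1 (play H v₀ m₀ j).2 := by
  refine frequently_atTop.2 fun N => ?_
  obtain ⟨j, hj, -, hhit⟩ := exists_play_hits_target H hT (le_max_right N T)
  by_cases hm : (play H v₀ m₀ j).2 = m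
  · exact ⟨j, by omega, hm, hhit⟩
  obtain ⟨j', hj', hm', hhit'⟩ := exists_play_hits_target H hT (i := j + 1) (by omega)
  refine ⟨j', by omega, ?_, hhit'⟩
  rw [hm', play_succ]
  dsimp only
  rw [greedyMemory, if_pos hhit]
  omega

end LeastColours

theorem twoInf_play {n : ℕ} {E : V → Fin n → V → Prop}
    (H : ∀ v, ∃ c₁ c₂, c₁ < c₂ ∧ Reaches E v c₁ ∧ Reaches E v c₂) (v₀ : V) (m₀ : Fin 2) :
    TwoInf fun i => greedyColour H (play H v₀ m₀ i).1 (play H v₀ m₀ i).2 := by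
  obtain ⟨T, hT⟩ := exists_leastColour_play_eq H v₀ m₀
  have hlate : ∀ᶠ i in atTop, T ≤ i := eventually_ge_atTop T
  refine TwoInf.of_frequently_lt (a := leastColour H (play H v₀ m₀ T).1) ?_ ?_
  · refine ((frequently_play_hits_target H hT 0).and_eventually hlate).mono fun i ⟨⟨hm, hhit⟩, hi⟩ => ?_
    rw [hhit, hm, targetColour, if_pos rfl, hT i hi]
  · refine ((frequently_play_hits_target H hT 1).and_eventually hlate).mono fun i ⟨⟨hm, hhit⟩, hi⟩ => ?_
    rw [hhit, hm, targetColour, if_neg one_ne_zero, ← hT i hi]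
    exact leastColour_lt_secondColour H _

end ColouredGraph

open ColouredGraph in
/-- One-player games with objective `W_n`: if from every vertex of the
(Σ_n-edge-coloured) graph there is an infinite path whose colours realise `W_n`
(i.e. Eve, controlling all vertices, wins from every vertex), then Eve has a
winning strategy with 2 memory states: edge choices `σc, σt` and memory updates
`σm` depending only on the current vertex and memory state, such that from every
initial vertex and memory state the induced play produces a colour sequence in
`W_n`. -/
theorem stmt15 (n : ℕ) {V : Type} (E : V → Fin n → V → Prop)
    (hwin : ∀ v : V, ∃ (ρ : ℕ → V) (c : ℕ → Fin n),
      ρ 0 = v ∧ (∀ i, E (ρ i) (c i) (ρ (i + 1))) ∧ TwoInf c) :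
    ∃ (σc : V → Fin 2 → Fin n) (σt : V → Fin 2 → V) (σm : V → Fin 2 → Fin 2),
      (∀ v m, E v (σc v m) (σt v m)) ∧
      ∀ (v₀ : V) (m₀ : Fin 2),
        TwoInf (fun i =>
          let p := (fun q : V × Fin 2 => (σt q.1 q.2, σm q.1 q.2))^[i] (v₀, m₀)
          σc p.1 p.2) := by
  have H : ∀ v, ∃ c₁ c₂, c₁ < c₂ ∧ Reaches E v c₁ ∧ Reaches E v c₂ := fun v => by
    obtain ⟨ρ, c, rfl, hρ, hc⟩ := hwin v
    exact exists_lt_reaches_of_twoInf hρ hc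
  exact ⟨greedyColour H, greedyNext H, greedyMemory H, greedy_edge H, twoInf_play H⟩
end
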